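/- During a counterclockwise k-rotation of a directed line around points of S: if the rotating line, currently passing through p ∈ S with exactly k points of S to its right, reaches a new point q on its tail, then the ordered pair (q,p) is an oriented (k-1)-edge of S; if it reaches a new point q on its head, then (p,q) is an oriented k-edge of S. -/
import Mathlib


open Finset
open scoped Classical Topology

abbrev Pt : Type := ℝ × ℝ

/-- Twice the signed area of the triangle `a b c`; its sign is the orientation. -/
noncomputable def det3 (a b c : Pt) : ℝ :=
  (b.1 - a.1) * (c.2 - a.2) - (b.2 - a.2) * (c.1 - a.1)

/-- `S` is in general position: no three of its points are collinear. -/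
def GenPos (S : Finset Pt) : Prop :=
  ∀ a ∈ S, ∀ b ∈ S, ∀ c ∈ S, a ≠ b → a ≠ c → b ≠ c → det3 a b c ≠ 0

/-- A finite point set is in convex position. -/
def ConvexPos (Q : Finset Pt) : Prop :=
  ∀ x ∈ Q, x ∉ convexHull ℝ (↑(Q.erase x) : Set Pt)

/-- `crN S` : the number of 4-element subsets of `S` in convex position. -/
noncomputable def crN (S : Finset Pt) : ℕ :=
  ((S.powersetCard 4).filter ConvexPos).card

/-- Number of points of `S` strictly to the left of the directed line `p → q`. -/
noncomputable def sideCount (S : Finset Pt) (p q : Pt) : ℕ :=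
  (S.filter (fun x => 0 < det3 p q x)).card

/-- `{p, q}` is a `j`-edge of `S`: exactly `j` points of `S` lie in one of the open
half-planes bounded by the line through `p` and `q`. -/
def IsJEdge (S : Finset Pt) (j : ℕ) (p q : Pt) : Prop :=
  p ∈ S ∧ q ∈ S ∧ p ≠ q ∧ (sideCount S p q = j ∨ sideCount S q p = j)

/-- `ej S j` : the number of (unordered) `j`-edges of `S`. -/
noncomputable def ej (S : Finset Pt) (j : ℕ) : ℕ :=
  ((S.powersetCard 2).filter (fun e => ∃ p q : Pt, e = {p, q} ∧ IsJEdge S j p q)).card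

/-- `Ek S k` : the number of `(≤ k)`-edges of `S`. -/
noncomputable def Ek (S : Finset Pt) (k : ℕ) : ℕ :=
  ((S.powersetCard 2).filter
    (fun e => ∃ p q : Pt, e = {p, q} ∧ ∃ j ≤ k, IsJEdge S j p q)).card

/-- The vertices of the convex hull of `S` (its extreme points). -/
noncomputable def hullVertices (S : Finset Pt) : Finset Pt :=
  S.filter (fun x => x ∉ convexHull ℝ (↑(S.erase x) : Set Pt))

/-- Cross product of two planar vectors. -/
noncomputable def crossP (u v : Pt) : ℝ := u.1 * v.2 - u.2 * v.1

/-- Dot product of two planar vectors. -/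
noncomputable def dotP (u v : Pt) : ℝ := u.1 * v.1 + u.2 * v.2

/-- `v` is the direction of a halving ray for the extreme point `p` of `S`:
the oriented line through `p` with direction `v` avoids `S \ {p}`, splits
`S \ {p}` into parts of sizes `⌊(n-1)/2⌋` and `⌈(n-1)/2⌉`, and is oriented away
from `S` (its head lies outside a half-plane through `p` containing `S`). -/
noncomputable def HalvingRay (S : Finset Pt) (p v : Pt) : Prop :=
  v ≠ 0 ∧
  (∀ x ∈ S, x ≠ p → ∀ t : ℝ, x ≠ p + t • v) ∧
  ((S.filter (fun x => 0 < crossP v (x - p))).card = (S.card - 1) / 2 ∨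
   (S.filter (fun x => 0 < crossP v (x - p))).card = (S.card - 1) - (S.card - 1) / 2) ∧
  (∃ w : Pt, (∀ x ∈ S, dotP w (x - p) ≤ 0) ∧ 0 < dotP w v)

/-- The unit direction vector of angle `θ`. -/
noncomputable def dir (θ : ℝ) : Pt := (Real.cos θ, Real.sin θ)

lemma crossP_smul (u : Pt) (s : ℝ) (v : Pt) : crossP u (s • v) = s * crossP u v := by
  simp [crossP]; ring

lemma crossP_dir_dir (θ θ₀ : ℝ) : crossP (dir θ) (dir θ₀) = Real.sin (θ₀ - θ) := by
  simp [crossP, dir, Real.sin_sub]; ring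

lemma det3_tail (p x d : Pt) (s : ℝ) :
    det3 (p + s • d) p x = (-s) * crossP d (x - p) := by
  simp [det3, crossP]; ring

lemma det3_head (p x d : Pt) (s : ℝ) :
    det3 p (p + s • d) x = s * crossP d (x - p) := by
  simp [det3, crossP]; ring

lemma cont_cross (c : Pt) : Continuous fun θ : ℝ => crossP (dir θ) c := by
  simp only [crossP, dir]; fun_prop

lemma st18_core (S : Finset Pt) (hgp : GenPos S) (p q : Pt)
    (hp : p ∈ S) (hq : q ∈ S) (hpq : p ≠ q)
    (k : ℕ) (θ₀ δ : ℝ) (hδ : 0 < δ)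
    (hbefore : ∀ θ ∈ Set.Ioo (θ₀ - δ) θ₀,
      (∀ x ∈ S, x ≠ p → crossP (dir θ) (x - p) ≠ 0) ∧
      (S.filter (fun x => crossP (dir θ) (x - p) < 0)).card = k)
    (s : ℝ) (hs : s ≠ 0) (hqs : q = p + s • dir θ₀) :
    (if s < 0 then (S.filter (fun x => crossP (dir θ₀) (x - p) < 0)).card + 1 = k
     else (S.filter (fun x => crossP (dir θ₀) (x - p) < 0)).card = k) := by
  have hq' : q - p = s • dir θ₀ := by rw [hqs]; exact add_sub_cancel_left _ _
  have hT : ∀ x ∈ S, x ≠ p → x ≠ q → crossP (dir θ₀) (x - p) ≠ 0 := by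
    intro x hx hxp hxq h0
    apply hgp p hp q hq x hx hpq (fun h => hxp h.symm) (fun h => hxq h.symm)
    rw [hqs, det3_head, h0, mul_zero]
  have hEv : ∀ x ∈ S.erase q, ∀ᶠ θ in 𝓝 θ₀,
      (crossP (dir θ) (x - p) < 0 ↔ crossP (dir θ₀) (x - p) < 0) := by
    intro x hx
    by_cases hxp : x = p
    · subst hxp
      filter_upwards with θ
      simp [crossP]
    · have hc : crossP (dir θ₀) (x - p) ≠ 0 :=
        hT x (mem_of_mem_erase hx) hxp (ne_of_mem_erase hx)
      set c := crossP (dir θ₀) (x - p) with hcdef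
      have hmem : Set.Ioo (c - |c|) (c + |c|) ∈ 𝓝 c := by
        apply isOpen_Ioo.mem_nhds
        constructor <;> [skip; skip] <;>
          · have := abs_pos.mpr hc; linarith
      have := ((cont_cross (x - p)).continuousAt (x := θ₀)).eventually_mem hmem
      filter_upwards [this] with θ hθ
      rcases hc.lt_or_gt with h | h
      · rw [abs_of_neg h] at hθ
        constructor <;> intro _ <;> [exact h; linarith [hθ.2]]
      · rw [abs_of_pos h] at hθ
        constructor <;> intro h2 <;> [linarith [hθ.1]; linarith]
  have hAll : ∀ᶠ θ in 𝓝[<] θ₀,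
      (∀ x ∈ S.erase q, (crossP (dir θ) (x - p) < 0 ↔ crossP (dir θ₀) (x - p) < 0)) ∧
      θ ∈ Set.Ioo (θ₀ - δ) θ₀ ∧ θ ∈ Set.Ioo (θ₀ - Real.pi) θ₀ := by
    refine Filter.Eventually.and ?_ (Filter.Eventually.and ?_ ?_)
    · exact (((S.erase q).eventually_all).2 hEv).filter_mono nhdsWithin_le_nhds
    · exact Filter.eventually_of_mem
        (Ioo_mem_nhdsLT_of_mem ⟨by linarith, le_refl _⟩) (fun θ h => h)
    · exact Filter.eventually_of_mem
        (Ioo_mem_nhdsLT_of_mem ⟨by linarith [Real.pi_pos], le_refl _⟩) (fun θ h => h)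
  obtain ⟨θ, hsgn, hIoo, hπ⟩ := hAll.exists
  obtain ⟨-, hcard⟩ := hbefore θ hIoo
  have hsin : 0 < Real.sin (θ₀ - θ) :=
    Real.sin_pos_of_pos_of_lt_pi (by linarith [hIoo.2]) (by linarith [hπ.1])
  have hqθ : crossP (dir θ) (q - p) = s * Real.sin (θ₀ - θ) := by
    rw [hq', crossP_smul, crossP_dir_dir]
  have hq0 : crossP (dir θ₀) (q - p) = 0 := by
    rw [hq', crossP_smul, crossP_dir_dir, sub_self, Real.sin_zero, mul_zero]
  have hqB : q ∉ S.filter (fun x => crossP (dir θ₀) (x - p) < 0) := by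
    simp [hq0]
  by_cases hsneg : s < 0
  · rw [if_pos hsneg]
    have hA : S.filter (fun x => crossP (dir θ) (x - p) < 0)
        = insert q (S.filter (fun x => crossP (dir θ₀) (x - p) < 0)) := by
      ext x
      simp only [mem_filter, mem_insert]
      by_cases hxq : x = q
      · subst hxq
        simp only [hqθ]
        constructor
        · intro _; left; trivial
        · intro _; exact ⟨hq, mul_neg_of_neg_of_pos hsneg hsin⟩
      · simp only [hxq, false_or]
        constructor
        · rintro ⟨h1, h2⟩
          exact ⟨h1, (hsgn x (mem_erase.2 ⟨hxq, h1⟩)).mp h2⟩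
        · rintro ⟨h1, h2⟩
          exact ⟨h1, (hsgn x (mem_erase.2 ⟨hxq, h1⟩)).mpr h2⟩
    rw [hA, card_insert_of_notMem hqB] at hcard
    omega
  · rw [if_neg hsneg]
    have hspos : 0 < s := lt_of_le_of_ne (not_lt.mp hsneg) (Ne.symm hs)
    have hA : S.filter (fun x => crossP (dir θ) (x - p) < 0)
        = S.filter (fun x => crossP (dir θ₀) (x - p) < 0) := by
      ext x
      simp only [mem_filter]
      by_cases hxq : x = q
      · subst hxq
        simp only [hqθ, hq0]
        constructor
        · rintro ⟨-, h2⟩; nlinarith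
        · rintro ⟨-, h2⟩; linarith
      · constructor
        · rintro ⟨h1, h2⟩
          exact ⟨h1, (hsgn x (mem_erase.2 ⟨hxq, h1⟩)).mp h2⟩
        · rintro ⟨h1, h2⟩
          exact ⟨h1, (hsgn x (mem_erase.2 ⟨hxq, h1⟩)).mpr h2⟩
    rw [hA] at hcard
    exact hcard

/-- during a counterclockwise `k`-rotation of a directed line around
`p ∈ S` (for all angles `θ` in an interval just before `θ₀` the line through `p`
of direction `dir θ` contains no other point of `S` and has exactly `k` points of
`S` strictly to its right), if at angle `θ₀` the line reaches `q ∈ S` on its tail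
then `(q, p)` is an oriented `(k-1)`-edge, and if it reaches `q` on its head then
`(p, q)` is an oriented `k`-edge. -/
theorem statement18 (S : Finset Pt) (hgp : GenPos S) (p q : Pt)
    (hp : p ∈ S) (hq : q ∈ S) (hpq : p ≠ q)
    (k : ℕ) (θ₀ δ : ℝ) (hδ : 0 < δ)
    (hbefore : ∀ θ ∈ Set.Ioo (θ₀ - δ) θ₀,
      (∀ x ∈ S, x ≠ p → crossP (dir θ) (x - p) ≠ 0) ∧
      (S.filter (fun x => crossP (dir θ) (x - p) < 0)).card = k) :
    ((∃ s : ℝ, s < 0 ∧ q = p + s • dir θ₀) →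
      (S.filter (fun x => det3 q p x < 0)).card = k - 1) ∧
    ((∃ s : ℝ, 0 < s ∧ q = p + s • dir θ₀) →
      (S.filter (fun x => det3 p q x < 0)).card = k) := by
  constructor
  · rintro ⟨s, hsneg, hqs⟩
    have hcore := st18_core S hgp p q hp hq hpq k θ₀ δ hδ hbefore s (ne_of_lt hsneg) hqs
    rw [if_pos hsneg] at hcore
    have hfe : S.filter (fun x => det3 q p x < 0)
        = S.filter (fun x => crossP (dir θ₀) (x - p) < 0) := by
      apply filter_congr
      intro x _
      simp only [hqs, det3_tail, eq_iff_iff]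
      constructor <;> intro h <;> nlinarith
    rw [hfe]
    omega
  · rintro ⟨s, hspos, hqs⟩
    have hcore := st18_core S hgp p q hp hq hpq k θ₀ δ hδ hbefore s (ne_of_gt hspos) hqs
    rw [if_neg (not_lt.mpr hspos.le)] at hcore
    have hfe : S.filter (fun x => det3 p q x < 0)
        = S.filter (fun x => crossP (dir θ₀) (x - p) < 0) := by
      apply filter_congr
      intro x _
      simp only [hqs, det3_head, eq_iff_iff]
      constructor <;> intro h <;> nlinarith
    rw [hfe]
    exact hcore
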